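/- arXiv:2005.09248 — 3 statements merged into one kernel-verified Lean document; each statement's English description precedes it below -/
import Mathlib

section
/- Let n ≥ 4α with α a positive integer, δ ∈ (1/2, 1), and let Φ be an (ΣεᵢqᵢPDP) count-query mechanism on binary datasets d ∈ {0,1}^n that is (α,δ)-PAC, i.e., for every dataset d, Pr(|Φ(d) − ∑_i d_i| < α) ≥ δ, and such that Φ satisfies (ε_i q_i)-personalised differential privacy in each coordinate i. Then ∑_{i=1}^n ε_i q_i ≥ (n/(4α)) · (ln δ − ln(1−δ)). -/
open MeasureTheory Real

/-!
Accuracy forces the outputs on the all-zero dataset and on a dataset with `2α` ones (on a set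
`T`) to put mass at least `δ` on two disjoint balls, so group privacy along the `2α` flips gives
`δ ≤ exp (∑ i ∈ T, c i) * (1 - δ)` for every `2α`-set `T`. Summing this over the `n` cyclic
translates `g + T₀` in `Fin n` of one `2α`-block `T₀` counts every index exactly `2α` times,
whence `n * log (δ / (1 - δ)) ≤ 2α * ∑ i, c i`.
-/

section Averaging

variable {G : Type*} [AddGroup G] [Fintype G]

theorem sum_sum_add_eq_card_nsmul_sum (x : G → ℝ) (S : Finset G) :
    ∑ g, ∑ s ∈ S, x (g + s) = S.card • ∑ g, x g := by
  rw [Finset.sum_comm, ← Finset.sum_const]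
  exact Finset.sum_congr rfl fun s _ => Equiv.sum_comp (Equiv.addRight s) x

theorem card_mul_le_card_mul_sum_of_le_sum (x : G → ℝ) (S : Finset G) (L : ℝ)
    (h : ∀ T : Finset G, T.card = S.card → L ≤ ∑ i ∈ T, x i) :
    Fintype.card G * L ≤ S.card * ∑ g, x g := by
  have htranslate : ∀ g, L ≤ ∑ s ∈ S, x (g + s) := fun g => by
    simpa only [Finset.sum_map, addLeftEmbedding_apply] using
      h (S.map (addLeftEmbedding g)) (Finset.card_map _)
  calc (Fintype.card G : ℝ) * L = ∑ _g : G, L := by simp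
    _ ≤ ∑ g, ∑ s ∈ S, x (g + s) := Finset.sum_le_sum fun g _ => htranslate g
    _ = S.card * ∑ g, x g := by rw [sum_sum_add_eq_card_nsmul_sum, nsmul_eq_mul]

end Averaging

section GroupPrivacy

variable {ι Ω : Type*} [MeasurableSpace Ω]

def IsBinary (d : ι → ℝ) : Prop := ∀ j, d j = 0 ∨ d j = 1

def IsPersonalizedDP (μ : (ι → ℝ) → Measure Ω) (c : ι → ℝ) : Prop :=
  ∀ (i : ι) (d d' : ι → ℝ), IsBinary d → IsBinary d' →
    d i ≠ d' i → (∀ j, j ≠ i → d j = d' j) →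
    ∀ R : Set Ω, MeasurableSet R → μ d R ≤ ENNReal.ofReal (exp (c i)) * μ d' R

theorem IsPersonalizedDP.measure_le_exp_sum {μ : (ι → ℝ) → Measure Ω} {c : ι → ℝ}
    (hμ : IsPersonalizedDP μ c) (S : Finset ι) {d d' : ι → ℝ} (hd : IsBinary d)
    (hd' : IsBinary d') (hS : ∀ j, d j ≠ d' j ↔ j ∈ S) {R : Set Ω} (hR : MeasurableSet R) :
    μ d R ≤ ENNReal.ofReal (exp (∑ i ∈ S, c i)) * μ d' R := by
  classical
  induction S using Finset.induction_on generalizing d' with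
  | empty =>
    obtain rfl : d = d' := funext fun j => by simpa using hS j
    simp
  | @insert a S ha ih =>
    set d'' := Function.update d' a (d a)
    have hd'' : IsBinary d'' := fun j => by
      rcases eq_or_ne j a with rfl | hj
      · simpa [d''] using hd j
      · simpa [d'', hj] using hd' j
    have hS'' : ∀ j, d j ≠ d'' j ↔ j ∈ S := fun j => by
      rcases eq_or_ne j a with rfl | hj
      · simp [d'', ha]
      · simpa [d'', hj] using hS j
    have hstep : μ d'' R ≤ ENNReal.ofReal (exp (c a)) * μ d' R :=
      hμ a d'' d' hd'' hd' (by simpa [d''] using (hS a).2 (Finset.mem_insert_self a S))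
        (fun j hj => by simp [d'', hj]) R hR
    calc μ d R ≤ ENNReal.ofReal (exp (∑ i ∈ S, c i)) * μ d'' R := ih hd'' hS''
      _ ≤ ENNReal.ofReal (exp (∑ i ∈ S, c i)) * (ENNReal.ofReal (exp (c a)) * μ d' R) := by
        gcongr
      _ = ENNReal.ofReal (exp (∑ i ∈ insert a S, c i)) * μ d' R := by
        rw [Finset.sum_insert ha, add_comm, exp_add, ENNReal.ofReal_mul (exp_nonneg _), mul_assoc]

end GroupPrivacy

theorem measure_le_ofReal_one_sub {Ω : Type*} [MeasurableSpace Ω] {ν : Measure Ω}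
    [IsProbabilityMeasure ν] {A B : Set Ω} (hAB : Disjoint A B) (hB : MeasurableSet B)
    {δ : ℝ} (hδ : 0 ≤ δ) (hνB : ENNReal.ofReal δ ≤ ν B) :
    ν A ≤ ENNReal.ofReal (1 - δ) := by
  calc ν A ≤ ν Bᶜ := measure_mono hAB.subset_compl_right
    _ = 1 - ν B := prob_compl_eq_one_sub hB
    _ ≤ 1 - ENNReal.ofReal δ := tsub_le_tsub_left hνB 1
    _ = ENNReal.ofReal (1 - δ) := by rw [ENNReal.ofReal_sub 1 hδ, ENNReal.ofReal_one]

theorem log_sub_log_one_sub_le {δ c : ℝ} (hδ₀ : 0 < δ) (hδ₁ : δ < 1)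
    (h : δ ≤ exp c * (1 - δ)) : log δ - log (1 - δ) ≤ c := by
  have hlog := log_le_log hδ₀ h
  rw [log_mul (exp_ne_zero c) (by linarith), log_exp] at hlog
  linarith

theorem log_sub_log_one_sub_le_sum {n α : ℕ} {δ : ℝ} (hδ₀ : 0 < δ) (hδ₁ : δ < 1)
    {c : Fin n → ℝ} {μ : (Fin n → ℝ) → Measure ℝ} (hprob : ∀ d, IsProbabilityMeasure (μ d))
    (hPDP : IsPersonalizedDP μ c)
    (hPAC : ∀ d : Fin n → ℝ, IsBinary d →
      ENNReal.ofReal δ ≤ μ d {r : ℝ | |r - ∑ i, d i| < (α : ℝ)})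
    (T : Finset (Fin n)) (hT : T.card = 2 * α) :
    log δ - log (1 - δ) ≤ ∑ i ∈ T, c i := by
  set dT : Fin n → ℝ := fun i => if i ∈ T then 1 else 0
  have hbin0 : IsBinary (fun _ : Fin n => (0 : ℝ)) := fun _ => Or.inl rfl
  have hbinT : IsBinary dT := fun j => by by_cases h : j ∈ T <;> simp [dT, h]
  have hball : ∀ s : ℝ, {r : ℝ | |r - s| < (α : ℝ)} = Metric.ball s α := fun s => by
    ext r; simp [Real.dist_eq]
  have hsumT : ∑ i, dT i = 2 * α := by simp [dT, Finset.sum_ite_mem, hT]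
  have hdisj : Disjoint (Metric.ball (0 : ℝ) α) (Metric.ball (2 * α : ℝ) α) :=
    Metric.ball_disjoint_ball (by simp [Real.dist_eq, abs_of_nonneg]; linarith)
  have hacc0 := hPAC _ hbin0
  have haccT := hPAC _ hbinT
  simp only [hball, hsumT, Finset.sum_const_zero] at hacc0 haccT
  have hmiss : μ dT (Metric.ball 0 α) ≤ ENNReal.ofReal (1 - δ) :=
    measure_le_ofReal_one_sub hdisj measurableSet_ball hδ₀.le haccT
  have hgroup := hPDP.measure_le_exp_sum T hbin0 hbinT
    (fun j => by by_cases h : j ∈ T <;> simp [dT, h]) (measurableSet_ball (x := (0 : ℝ)) (ε := α))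
  refine log_sub_log_one_sub_le hδ₀ hδ₁ ((ENNReal.ofReal_le_ofReal_iff (by positivity)).1 ?_)
  calc ENNReal.ofReal δ ≤ μ (fun _ => 0) (Metric.ball 0 α) := hacc0
    _ ≤ ENNReal.ofReal (exp (∑ i ∈ T, c i)) * ENNReal.ofReal (1 - δ) :=
      hgroup.trans (by gcongr)
    _ = ENNReal.ofReal (exp (∑ i ∈ T, c i) * (1 - δ)) := (ENNReal.ofReal_mul (exp_nonneg _)).symm

open scoped Classical in
theorem count_query_accuracy_lower_bound_general {n α : ℕ} (hα : 1 ≤ α) (hn : 4 * α ≤ n)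
    (δ : ℝ) (hδhalf : 1/2 < δ) (hδone : δ < 1)
    (ε q : Fin n → ℝ)
    (μ : (Fin n → ℝ) → Measure ℝ) (hprob : ∀ d, IsProbabilityMeasure (μ d))
    (hPDP : ∀ (i : Fin n) (d d' : Fin n → ℝ),
      (∀ j, d j = 0 ∨ d j = 1) → (∀ j, d' j = 0 ∨ d' j = 1) →
      d i ≠ d' i → (∀ j, j ≠ i → d j = d' j) →
      ∀ R : Set ℝ, MeasurableSet R →
        μ d R ≤ ENNReal.ofReal (Real.exp (ε i * q i)) * μ d' R)
    (hPAC : ∀ d : Fin n → ℝ, (∀ j, d j = 0 ∨ d j = 1) →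
      ENNReal.ofReal δ ≤ μ d {r : ℝ | |r - ∑ i, d i| < (α : ℝ)}) :
    (n : ℝ) / (4 * α) * (Real.log δ - Real.log (1 - δ)) ≤ ∑ i, ε i * q i := by
  have : NeZero n := ⟨by omega⟩
  set L := log δ - log (1 - δ)
  have hL : 0 ≤ L := sub_nonneg.2 (log_le_log (by linarith) (by linarith))
  have hsubset : ∀ T : Finset (Fin n), T.card = 2 * α → L ≤ ∑ i ∈ T, ε i * q i :=
    log_sub_log_one_sub_le_sum (by linarith) hδone hprob hPDP hPAC
  have h2α : 2 * α ≤ n := by omega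
  have hblock : (Finset.univ.map (Fin.castLEEmb h2α)).card = 2 * α := by simp
  have havg := card_mul_le_card_mul_sum_of_le_sum (fun i => ε i * q i) _ L
    (fun T hT => hsubset T (hT.trans hblock))
  rw [hblock, Fintype.card_fin] at havg
  have hα' : (0 : ℝ) < α := by exact_mod_cast hα
  calc (n : ℝ) / (4 * α) * L ≤ n / (2 * α) * L := by gcongr; linarith
    _ ≤ ∑ i, ε i * q i := by
      rw [div_mul_eq_mul_div, div_le_iff₀ (by positivity)]
      push_cast at havg
      linarith

open scoped Classical in
theorem count_query_accuracy_lower_bound {n α : ℕ} (hα : 1 ≤ α) (hn : 4 * α ≤ n)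
    (δ : ℝ) (hδhalf : 1/2 < δ) (hδone : δ < 1)
    (ε q : Fin n → ℝ) (hε : ∀ i, 0 ≤ ε i) (hq : ∀ i, q i = 0 ∨ q i = 1)
    (μ : (Fin n → ℝ) → Measure ℝ) (hprob : ∀ d, IsProbabilityMeasure (μ d))
    (hPDP : ∀ (i : Fin n) (d d' : Fin n → ℝ),
      (∀ j, d j = 0 ∨ d j = 1) → (∀ j, d' j = 0 ∨ d' j = 1) →
      d i ≠ d' i → (∀ j, j ≠ i → d j = d' j) →
      ∀ R : Set ℝ, MeasurableSet R →
        μ d R ≤ ENNReal.ofReal (Real.exp (ε i * q i)) * μ d' R)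
    (hPAC : ∀ d : Fin n → ℝ, (∀ j, d j = 0 ∨ d j = 1) →
      ENNReal.ofReal δ ≤ μ d {r : ℝ | |r - ∑ i, d i| < (α : ℝ)}) :
    (n : ℝ) / (4 * α) * (Real.log δ - Real.log (1 - δ)) ≤ ∑ i, ε i * q i :=
  count_query_accuracy_lower_bound_general hα hn δ hδhalf hδone ε q μ hprob hPDP hPAC
end

section
/- In the count-query impossibility setup, suppose the 4α values ε_1 q_1, ..., ε_{4α} q_{4α} (sorted ascending among n values) satisfy ∑_{i=1}^{4α} ε_i q_i < ln δ − ln(1−δ), and among the first 4α coordinates at least 2α entries of the binary dataset d equal 0. Let d' be obtained from d by setting exactly 2α of these 0-entries to 1. Then the count satisfies ∑_i d'_i = ∑_i d_i + 2α, and any event R with Pr(Φ(d) ∈ R) ≥ δ satisfies Pr(Φ(d') ∈ R) > 1 − δ, where Φ is (ε_i q_i)-PDP in each coordinate. -/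
/-!
Flipping the `2α` zero entries of `d` indexed by `I'` one at a time and applying the
per-coordinate privacy bound at each step gives group privacy:
`Pr(Φ(d) ∈ R) ≤ exp(∑_{i ∈ I'} ε_i q_i) Pr(Φ(d') ∈ R)`.
Since `I'` lies among the first `4α` coordinates and all `ε_i q_i ≥ 0`, the exponent is
below `ln δ − ln(1−δ)`, so `Pr(Φ(d') ∈ R) ≤ 1 − δ` would force `Pr(Φ(d) ∈ R) < δ`.
-/

open MeasureTheory Real

section PersonalizedDP

variable {ι Ω : Type*} [MeasurableSpace Ω]

theorem IsPersonalizedDP.le_exp_sum_mul [DecidableEq ι] {μ : (ι → ℝ) → Measure Ω} {c : ι → ℝ}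
    (hμ : IsPersonalizedDP μ c) {R : Set Ω} (hR : MeasurableSet R) {d : ι → ℝ} (hd : IsBinary d)
    (S : Finset ι) {d' : ι → ℝ} (hd' : IsBinary d') (hS : ∀ i ∈ S, d i ≠ d' i)
    (hSc : ∀ j, j ∉ S → d j = d' j) :
    μ d R ≤ ENNReal.ofReal (exp (∑ i ∈ S, c i)) * μ d' R := by
  induction S using Finset.induction_on generalizing d' with
  | empty =>
    obtain rfl : d = d' := funext fun j => hSc j (Finset.notMem_empty j)
    simp
  | @insert a S ha ih =>
    set d'' := Function.update d' a (d a)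
    have hd'' : IsBinary d'' := by
      intro j
      rcases eq_or_ne j a with rfl | hj
      · simpa [d''] using hd j
      · simpa [d'', hj] using hd' j
    have hSd'' : ∀ i ∈ S, d i ≠ d'' i := fun i hi => by
      have hia : i ≠ a := ne_of_mem_of_not_mem hi ha
      simpa [d'', hia] using hS i (Finset.mem_insert_of_mem hi)
    have hScd'' : ∀ j, j ∉ S → d j = d'' j := fun j hj => by
      rcases eq_or_ne j a with rfl | hja
      · simp [d'']
      · simpa [d'', hja] using hSc j (by simp [hja, hj])
    have hstep : μ d'' R ≤ ENNReal.ofReal (exp (c a)) * μ d' R :=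
      hμ a d'' d' hd'' hd' (by simpa [d''] using hS a (Finset.mem_insert_self a S))
        (fun j hj => by simp [d'', hj]) R hR
    calc μ d R ≤ ENNReal.ofReal (exp (∑ i ∈ S, c i)) * μ d'' R := ih hd'' hSd'' hScd''
      _ ≤ ENNReal.ofReal (exp (∑ i ∈ S, c i)) * (ENNReal.ofReal (exp (c a)) * μ d' R) := by
        gcongr
      _ = ENNReal.ofReal (exp (∑ i ∈ insert a S, c i)) * μ d' R := by
        rw [Finset.sum_insert ha, exp_add, ENNReal.ofReal_mul (exp_nonneg _)]
        ring

end PersonalizedDP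

theorem sum_eq_sum_add_card_of_flip_zeros {ι : Type*} [Fintype ι] [DecidableEq ι] {S : Finset ι}
    {d d' : ι → ℝ} (hS : ∀ i ∈ S, d i = 0) (hd' : ∀ i, d' i = if i ∈ S then 1 else d i) :
    ∑ i, d' i = ∑ i, d i + S.card := by
  have hsplit : ∀ i, d' i = d i + if i ∈ S then 1 else 0 := fun i => by
    rw [hd']
    split_ifs with hi
    · simp [hS i hi]
    · simp
  simp only [hsplit, Finset.sum_add_distrib, Finset.sum_boole, Finset.filter_mem_eq_inter,
    Finset.univ_inter]

theorem exp_mul_one_sub_lt {δ E : ℝ} (hδ : 0 < δ) (hδ1 : δ < 1)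
    (hE : E < log δ - log (1 - δ)) : exp E * (1 - δ) < δ := by
  have h1δ : 0 < 1 - δ := by linarith
  calc exp E * (1 - δ) < exp (log δ - log (1 - δ)) * (1 - δ) := by gcongr
    _ = δ := by rw [exp_sub, exp_log hδ, exp_log h1δ, div_mul_cancel₀ _ h1δ.ne']

theorem ofReal_one_sub_lt_of_ofReal_le_exp_mul {δ E : ℝ} {x : ENNReal} (hδ : 0 < δ) (hδ1 : δ < 1)
    (hE : E < log δ - log (1 - δ)) (hx : ENNReal.ofReal δ ≤ ENNReal.ofReal (exp E) * x) :
    ENNReal.ofReal (1 - δ) < x := by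
  by_contra! hle
  have : ENNReal.ofReal δ < ENNReal.ofReal δ :=
    calc ENNReal.ofReal δ ≤ ENNReal.ofReal (exp E) * x := hx
      _ ≤ ENNReal.ofReal (exp E) * ENNReal.ofReal (1 - δ) := by gcongr
      _ = ENNReal.ofReal (exp E * (1 - δ)) := (ENNReal.ofReal_mul (exp_nonneg _)).symm
      _ < ENNReal.ofReal δ := (ENNReal.ofReal_lt_ofReal_iff hδ).mpr (exp_mul_one_sub_lt hδ hδ1 hE)
  exact this.false

open scoped Classical in
theorem count_query_flip_step_general {n α : ℕ}
    (δ : ℝ) (hδhalf : 1/2 < δ) (hδone : δ < 1)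
    (ε q : Fin n → ℝ) (hε : ∀ i, 0 ≤ ε i) (hq : ∀ i, q i = 0 ∨ q i = 1)
    (μ : (Fin n → ℝ) → Measure ℝ)
    (hPDP : ∀ (i : Fin n) (d d' : Fin n → ℝ),
      (∀ j, d j = 0 ∨ d j = 1) → (∀ j, d' j = 0 ∨ d' j = 1) →
      d i ≠ d' i → (∀ j, j ≠ i → d j = d' j) →
      ∀ R : Set ℝ, MeasurableSet R →
        μ d R ≤ ENNReal.ofReal (Real.exp (ε i * q i)) * μ d' R)
    (d : Fin n → ℝ) (hd : ∀ j, d j = 0 ∨ d j = 1)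
    (hsum : ∑ i ∈ Finset.univ.filter (fun i : Fin n => (i : ℕ) < 4 * α), ε i * q i
        < Real.log δ - Real.log (1 - δ))
    (I' : Finset (Fin n)) (hI'lt : ∀ i ∈ I', (i : ℕ) < 4 * α)
    (hI'card : I'.card = 2 * α) (hI'zero : ∀ i ∈ I', d i = 0)
    (d' : Fin n → ℝ) (hd'def : ∀ i, d' i = if i ∈ I' then 1 else d i) :
    (∑ i, d' i = ∑ i, d i + 2 * α) ∧
    ∀ R : Set ℝ, MeasurableSet R → ENNReal.ofReal δ ≤ μ d R →
      ENNReal.ofReal (1 - δ) < μ d' R := by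
  refine ⟨by rw [sum_eq_sum_add_card_of_flip_zeros hI'zero hd'def, hI'card]; push_cast; ring,
    fun R hR hδR => ?_⟩
  have hd' : IsBinary d' := fun j => by rw [hd'def]; split_ifs <;> simp [hd j]
  have hgroup := IsPersonalizedDP.le_exp_sum_mul hPDP hR hd I' hd'
    (fun i hi => by simp [hd'def, hi, hI'zero i hi]) (fun j hj => by simp [hd'def, hj])
  have hbudget : ∑ i ∈ I', ε i * q i < log δ - log (1 - δ) := by
    refine lt_of_le_of_lt (Finset.sum_le_sum_of_subset_of_nonneg ?_ ?_) hsum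
    · exact fun i hi => Finset.mem_filter.mpr ⟨Finset.mem_univ i, hI'lt i hi⟩
    · exact fun i _ _ => mul_nonneg (hε i) (by rcases hq i with h | h <;> simp [h])
  exact ofReal_one_sub_lt_of_ofReal_le_exp_mul (by linarith) hδone hbudget (hδR.trans hgroup)

open scoped Classical in
theorem count_query_flip_step {n α : ℕ} (hα : 1 ≤ α) (hn : 4 * α ≤ n)
    (δ : ℝ) (hδhalf : 1/2 < δ) (hδone : δ < 1)
    (ε q : Fin n → ℝ) (hε : ∀ i, 0 ≤ ε i) (hq : ∀ i, q i = 0 ∨ q i = 1)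
    (μ : (Fin n → ℝ) → Measure ℝ) (hprob : ∀ d, IsProbabilityMeasure (μ d))
    (hPDP : ∀ (i : Fin n) (d d' : Fin n → ℝ),
      (∀ j, d j = 0 ∨ d j = 1) → (∀ j, d' j = 0 ∨ d' j = 1) →
      d i ≠ d' i → (∀ j, j ≠ i → d j = d' j) →
      ∀ R : Set ℝ, MeasurableSet R →
        μ d R ≤ ENNReal.ofReal (Real.exp (ε i * q i)) * μ d' R)
    (d : Fin n → ℝ) (hd : ∀ j, d j = 0 ∨ d j = 1)
    (hsorted : ∀ i j : Fin n, i ≤ j → ε i * q i ≤ ε j * q j)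
    (hsum : ∑ i ∈ Finset.univ.filter (fun i : Fin n => (i : ℕ) < 4 * α), ε i * q i
        < Real.log δ - Real.log (1 - δ))
    (I' : Finset (Fin n)) (hI'lt : ∀ i ∈ I', (i : ℕ) < 4 * α)
    (hI'card : I'.card = 2 * α) (hI'zero : ∀ i ∈ I', d i = 0)
    (d' : Fin n → ℝ) (hd'def : ∀ i, d' i = if i ∈ I' then 1 else d i) :
    (∑ i, d' i = ∑ i, d i + 2 * α) ∧
    ∀ R : Set ℝ, MeasurableSet R → ENNReal.ofReal δ ≤ μ d R →
      ENNReal.ofReal (1 - δ) < μ d' R :=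
  count_query_flip_step_general δ hδhalf hδone ε q hε hq μ hPDP d hd hsum I' hI'lt hI'card hI'zero
    d' hd'def
end

section
/- Let Φ_φ be the PE exponential-type mechanism with output distribution Pr(Φ_φ(d) = r) = exp((1/2)σ_φ(d,r)) / ∑_{r'} exp((1/2)σ_φ(d,r')) over a finite range, where σ_φ(d,r) = max_{d' : φ(d') = r} (−∑_{i ∈ I_{d⊕d'}} ε_i) and I_{d⊕d'} = {i : d_i ≠ d'_i}. Then for every i and any pair of i-neighbouring datasets d, d̃, and any output r, Pr(Φ_φ(d) = r) ≤ e^{ε_i} · Pr(Φ_φ(d̃) = r), i.e., Φ_φ is ε-personalised differentially private. -/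
/-!
Changing coordinate `i` of the dataset moves the weighted Hamming distance to every
`d'` by at most `ε i`, hence moves every score `σ(·, r)` by at most `ε i`. In the Gibbs
weights `exp (σ / 2)` the numerator and the normalising sum therefore each change by a
factor at most `exp (ε i / 2)`, and the two factors multiply to `exp (ε i)`.
-/

open Finset

theorem sum_filter_ne_le_add_of_eq_off {ι α : Type*} [Fintype ι] [DecidableEq ι]
    [DecidableEq α] {ε : ι → ℝ} (hε : ∀ j, 0 ≤ ε j) {i : ι} {x y : ι → α}
    (hxy : ∀ j, j ≠ i → x j = y j) (z : ι → α) :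
    ∑ j ∈ univ.filter (fun j => y j ≠ z j), ε j ≤
      ε i + ∑ j ∈ univ.filter (fun j => x j ≠ z j), ε j := by
  rw [sum_filter, sum_filter, ← Fintype.sum_ite_eq' i ε, ← sum_add_distrib]
  refine sum_le_sum fun j _ => ?_
  by_cases hji : j = i
  · subst hji
    rw [if_pos rfl]
    split_ifs <;> linarith [hε j]
  · simp only [hji, if_false, hxy j hji, zero_add, le_refl]

theorem le_add_of_mem_of_mem_upperBounds {α : Type*} [Preorder α] [Add α] [AddRightMono α]
    {S T : Set α} {a b c : α} (ha : a ∈ S) (hb : b ∈ upperBounds T)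
    (h : ∀ x ∈ S, ∃ y ∈ T, x ≤ y + c) : a ≤ b + c := by
  obtain ⟨y, hy, hay⟩ := h a ha
  exact hay.trans (add_le_add_left (hb hy) c)

theorem score_le_score_add_of_eq_off {n : ℕ} {D R : Type*} [DecidableEq D]
    {φ : (Fin n → D) → R} {ε : Fin n → ℝ} (hε : ∀ i, 0 ≤ ε i) {σ : (Fin n → D) → R → ℝ}
    (hσ : ∀ d r, IsGreatest
      {v : ℝ | ∃ d', φ d' = r ∧
        v = -∑ i ∈ univ.filter (fun i => d i ≠ d' i), ε i} (σ d r))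
    {i : Fin n} {d dt : Fin n → D} (heq : ∀ j, j ≠ i → d j = dt j) (r : R) :
    σ d r ≤ σ dt r + ε i := by
  refine le_add_of_mem_of_mem_upperBounds (hσ d r).1 (hσ dt r).2 ?_
  rintro _ ⟨d', hd', rfl⟩
  exact ⟨_, ⟨d', hd', rfl⟩, by linarith [sum_filter_ne_le_add_of_eq_off hε heq d']⟩

theorem exp_div_sum_exp_le_exp_mul {R : Type*} [Fintype R] {f g : R → ℝ} {c : ℝ}
    (hfg : ∀ r, f r ≤ g r + c) (hgf : ∀ r, g r ≤ f r + c) (r : R) :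
    Real.exp (f r) / ∑ r', Real.exp (f r') ≤
      Real.exp (2 * c) * (Real.exp (g r) / ∑ r', Real.exp (g r')) := by
  have sum_exp_pos : ∀ h : R → ℝ, 0 < ∑ r', Real.exp (h r') :=
    fun h => sum_pos (fun r' _ => Real.exp_pos _) ⟨r, mem_univ r⟩
  have hnum : Real.exp (f r) ≤ Real.exp c * Real.exp (g r) := by
    rw [← Real.exp_add]
    exact Real.exp_le_exp.2 (by linarith [hfg r])
  have hden : ∑ r', Real.exp (g r') ≤ Real.exp c * ∑ r', Real.exp (f r') := by
    rw [mul_sum]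
    refine sum_le_sum fun r' _ => ?_
    rw [← Real.exp_add]
    exact Real.exp_le_exp.2 (by linarith [hgf r'])
  rw [← mul_div_assoc, div_le_div_iff₀ (sum_exp_pos f) (sum_exp_pos g)]
  calc Real.exp (f r) * ∑ r', Real.exp (g r')
      ≤ (Real.exp c * Real.exp (g r)) * (Real.exp c * ∑ r', Real.exp (f r')) :=
        mul_le_mul hnum hden (sum_exp_pos g).le (by positivity)
    _ = Real.exp (2 * c) * Real.exp (g r) * ∑ r', Real.exp (f r') := by
        rw [two_mul, Real.exp_add]; ring

theorem pe_mechanism_is_pdp_general {n : ℕ} {D R : Type*} [DecidableEq D]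
    [Fintype R]
    (φ : (Fin n → D) → R)
    (ε : Fin n → ℝ) (hε : ∀ i, 0 ≤ ε i)
    (σ : (Fin n → D) → R → ℝ)
    (hσ : ∀ d r, IsGreatest
      {v : ℝ | ∃ d', φ d' = r ∧
        v = -∑ i ∈ Finset.univ.filter (fun i => d i ≠ d' i), ε i} (σ d r))
    (p : (Fin n → D) → R → ℝ)
    (hp : ∀ d r, p d r = Real.exp (σ d r / 2) / ∑ r' : R, Real.exp (σ d r' / 2))
    (i : Fin n) (d dt : Fin n → D) (heq : ∀ j, j ≠ i → d j = dt j)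
    (r : R) :
    p d r ≤ Real.exp (ε i) * p dt r := by
  have hd : ∀ r', σ d r' / 2 ≤ σ dt r' / 2 + ε i / 2 := fun r' => by
    linarith [score_le_score_add_of_eq_off hε hσ heq r']
  have hdt : ∀ r', σ dt r' / 2 ≤ σ d r' / 2 + ε i / 2 := fun r' => by
    linarith [score_le_score_add_of_eq_off hε hσ (fun j hj => (heq j hj).symm) r']
  rw [hp, hp, ← mul_div_cancel₀ (ε i) two_ne_zero]
  exact exp_div_sum_exp_le_exp_mul hd hdt r

theorem pe_mechanism_is_pdp {n : ℕ} {D R : Type*} [Fintype D] [DecidableEq D]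
    [Fintype R] [Nonempty R]
    (φ : (Fin n → D) → R) (hsurj : Function.Surjective φ)
    (ε : Fin n → ℝ) (hε : ∀ i, 0 ≤ ε i)
    (σ : (Fin n → D) → R → ℝ)
    (hσ : ∀ d r, IsGreatest
      {v : ℝ | ∃ d', φ d' = r ∧
        v = -∑ i ∈ Finset.univ.filter (fun i => d i ≠ d' i), ε i} (σ d r))
    (p : (Fin n → D) → R → ℝ)
    (hp : ∀ d r, p d r = Real.exp (σ d r / 2) / ∑ r' : R, Real.exp (σ d r' / 2))
    (i : Fin n) (d dt : Fin n → D) (hne : d i ≠ dt i) (heq : ∀ j, j ≠ i → d j = dt j)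
    (r : R) :
    p d r ≤ Real.exp (ε i) * p dt r :=
  pe_mechanism_is_pdp_general φ ε hε σ hσ p hp i d dt heq r
end
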